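/- arXiv:2006.10508 — 2 statements merged into one kernel-verified Lean document; each statement's English description precedes it below -/
import Mathlib

section
/- A finite Veltman frame F validates all instances of Beklemishev's principle B (the schema A▷B → (A∧□C ▷ B∧□C) for A ∈ ES₂) if and only if there is a B-simulation bis on F such that for all x,y with xRy there exists y' with yS_xy', bis(y,y'), and for all d,e, if y'S_xd and dRe then yRe. -/
inductive Form : Type where
  | var : ℕ → Form
  | bot : Form
  | and : Form → Form → Form
  | imp : Form → Form → Form
  | box : Form → Form
  | rhd : Form → Form → Form

namespace Form

def neg (A : Form) : Form := A.imp .bot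
def or (A B : Form) : Form := (A.neg).imp B
def dia (A : Form) : Form := (A.neg.box).neg
def iff (A B : Form) : Form := (A.imp B).and (B.imp A)

end Form

/-- A boolean valuation respecting the propositional connectives
(modal formulas are treated as atoms). -/
def BoolEval (v : Form → Bool) : Prop :=
  v Form.bot = false ∧
  (∀ A B, v (Form.and A B) = (v A && v B)) ∧
  (∀ A B, v (Form.imp A B) = (!(v A) || v B))

/-- Propositional tautologies. -/
def Taut (A : Form) : Prop := ∀ v, BoolEval v → v A = true

/-- The interpretability logic IL extended with an extra axiom schema `Ax`. -/
inductive ILExt (Ax : Form → Prop) : Form → Prop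
  | ax {A : Form} : Ax A → ILExt Ax A
  | taut {A : Form} : Taut A → ILExt Ax A
  | L1 {A B : Form} : ILExt Ax (((A.imp B).box).imp ((A.box).imp (B.box)))
  | L2 {A : Form} : ILExt Ax ((A.box).imp (A.box.box))
  | L3 {A : Form} : ILExt Ax ((((A.box).imp A).box).imp (A.box))
  | J1 {A B : Form} : ILExt Ax (((A.imp B).box).imp (A.rhd B))
  | J2 {A B C : Form} : ILExt Ax (((A.rhd B).and (B.rhd C)).imp (A.rhd C))
  | J3 {A B C : Form} : ILExt Ax (((A.rhd C).and (B.rhd C)).imp ((A.or B).rhd C))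
  | J4 {A B : Form} : ILExt Ax ((A.rhd B).imp ((A.dia).imp (B.dia)))
  | J5 {A : Form} : ILExt Ax ((A.dia).rhd A)
  | mp {A B : Form} : ILExt Ax (A.imp B) → ILExt Ax A → ILExt Ax B
  | nec {A : Form} : ILExt Ax A → ILExt Ax (A.box)

/-- The basic interpretability logic IL. -/
def IL : Form → Prop := ILExt (fun _ => False)

/-- Boolean combinations of boxed formulas. -/
inductive BS1 : Form → Prop
  | box {A : Form} : BS1 (Form.box A)
  | neg {A : Form} : BS1 A → BS1 (Form.neg A)
  | and {A B : Form} : BS1 A → BS1 B → BS1 (A.and B)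
  | or {A B : Form} : BS1 A → BS1 B → BS1 (A.or B)

/-- Essentially Σ₂ formulas. -/
inductive ES2 : Form → Prop
  | box {A : Form} : ES2 (Form.box A)
  | nbox {A : Form} : ES2 (Form.neg (Form.box A))
  | and {A B : Form} : ES2 A → ES2 B → ES2 (A.and B)
  | or {A B : Form} : ES2 A → ES2 B → ES2 (A.or B)
  | nrhd {A B : Form} : ES2 A → ES2 (Form.neg (A.rhd B))

/-- One step of the stratification of ES₂. -/
inductive ES2succ (P : Form → Prop) : Form → Prop
  | base {A : Form} : P A → ES2succ P A
  | and {A B : Form} : ES2succ P A → ES2succ P B → ES2succ P (A.and B)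
  | or {A B : Form} : ES2succ P A → ES2succ P B → ES2succ P (A.or B)
  | nrhd {A B : Form} : P A → ES2succ P (Form.neg (A.rhd B))

/-- The stages ES₂ⁿ: ES₂⁰ = BS₁; ES₂ⁿ⁺¹ closes ES₂ⁿ under ∧, ∨ and ¬(·▷·). -/
def ES2n : ℕ → Form → Prop
  | 0 => BS1
  | n+1 => ES2succ (ES2n n)

/-- Disjunctions of boxed formulas. -/
inductive DisjBox : Form → Prop
  | box {A : Form} : DisjBox (Form.box A)
  | or {A B : Form} : DisjBox A → DisjBox B → DisjBox (A.or B)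

/-- Conjunctions of disjunctions of boxed formulas. -/
inductive CNFBox : Form → Prop
  | base {A : Form} : DisjBox A → CNFBox A
  | and {A B : Form} : CNFBox A → CNFBox B → CNFBox (A.and B)

/-- Veltman frames. -/
structure VFrame where
  W : Type
  nonempty : Nonempty W
  R : W → W → Prop
  S : W → W → W → Prop
  R_trans : Transitive R
  R_cwf : WellFounded (fun x y => R y x)
  S_dom : ∀ x y z, S x y z → R x y ∧ R x z
  S_refl : ∀ x y, R x y → S x y y
  R_S : ∀ x y z, R x y → R y z → S x y z
  S_trans : ∀ x u v w, S x u v → S x v w → S x u w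

/-- Veltman forcing. -/
def force (F : VFrame) (V : F.W → ℕ → Prop) : F.W → Form → Prop
  | w, .var n => V w n
  | _, .bot => False
  | w, .and A B => force F V w A ∧ force F V w B
  | w, .imp A B => force F V w A → force F V w B
  | w, .box A => ∀ v, F.R w v → force F V v A
  | w, .rhd A B => ∀ u, F.R w u → force F V u A → ∃ v, F.S w u v ∧ force F V v B

/-- Validity in a frame. -/
def valid (F : VFrame) (A : Form) : Prop := ∀ V w, force F V w A

/-- The simulation relations bisₙ. -/
def bis (F : VFrame) : ℕ → F.W → F.W → Prop
  | 0 => fun b u => ∀ y, F.R b y ↔ F.R u y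
  | n+1 => fun b u => bis F n b u ∧
      ∀ c, F.R b c → ∃ c', F.R u c' ∧ bis F n c c' ∧ ∀ z, F.S u c' z → F.S b c z

/-- B-simulations. -/
def BSim (F : VFrame) (bs : F.W → F.W → Prop) : Prop :=
  (∀ x x', bs x x' → ∀ y, F.R x y ↔ F.R x' y) ∧
  (∀ x x' y, bs x x' → F.R x y →
      ∃ y', F.S x y y' ∧ bs y y' ∧ ∀ z, F.S x' y' z → F.S x y z)

/-- The depth of a point: the length of the longest R-chain starting at it. -/
noncomputable def depth (F : VFrame) (x : F.W) : ℕ :=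
  sSup {n | ∃ f : Fin (n+1) → F.W, f 0 = x ∧
    ∀ i : Fin n, F.R (f i.castSucc) (f i.succ)}

/-!
If `bs` is a B-simulation, `ES₂` formulas are preserved along `bs`, so for `x R y` with `A ∧ □C`
true at `y`, the point `y'` given by the frame condition satisfies `A`; then `A ▷ B` yields `v`
with `B`, and `□C` holds at `v` because the successors of `v` are successors of `y`.

Conversely, on a finite frame the decreasing chain of relations `bisₙ` stabilises at some `N`, and
`bis_N` is then a B-simulation. Under a valuation in which every set of worlds is defined by an
atom, each `bisₙ`-class `{u | bisₙ y u}` is defined by an `ES₂` formula `A`. Given `x R y`, apply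
B with this `A`, with `B` defining the union of the points `v` already satisfying the frame
condition and the points having a successor outside `y↑`, and with `C` defining `y↑`: the
antecedent holds at `x`, and the consequent produces the required `y'`, since `□C` at `y'`
excludes the second kind of point.
-/

namespace Form

def top : Form := (Form.bot.imp .bot).box

def conj : List Form → Form
  | [] => top
  | A :: L => A.and (conj L)

noncomputable def conjOn {α : Type*} [Finite α] (s : Set α) (f : α → Form) : Form :=
  conj (s.toFinite.toFinset.toList.map f)

end Form

namespace ES2

lemma conj {L : List Form} (h : ∀ A ∈ L, ES2 A) : ES2 (Form.conj L) := by
  induction L with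
  | nil => exact ES2.box
  | cons A L ih =>
    exact .and (h A List.mem_cons_self) (ih fun B hB => h B (List.mem_cons_of_mem A hB))

lemma conjOn {α : Type*} [Finite α] {s : Set α} {f : α → Form} (h : ∀ a, ES2 (f a)) :
    ES2 (Form.conjOn s f) :=
  conj (by simpa using fun a _ => h a)

end ES2

section Forcing

variable {F : VFrame} {V : F.W → ℕ → Prop} {w : F.W}

@[simp] lemma force_neg {A : Form} : force F V w A.neg ↔ ¬ force F V w A := Iff.rfl

@[simp] lemma force_or {A B : Form} :
    force F V w (A.or B) ↔ force F V w A ∨ force F V w B := by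
  simp only [Form.or, force, Form.neg]
  tauto

@[simp] lemma force_dia {A : Form} : force F V w A.dia ↔ ∃ v, F.R w v ∧ force F V v A := by
  simp [Form.dia, force]

lemma force_conj {L : List Form} : force F V w (Form.conj L) ↔ ∀ A ∈ L, force F V w A := by
  induction L with
  | nil => simp [Form.conj, Form.top, force]
  | cons A L ih => simp [Form.conj, force, ih]

@[simp] lemma force_conjOn {α : Type*} [Finite α] {s : Set α} {f : α → Form} :
    force F V w (Form.conjOn s f) ↔ ∀ a ∈ s, force F V w (f a) := by
  simp [Form.conjOn, force_conj]

end Forcing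

section Simulation

variable {F : VFrame} {bs : F.W → F.W → Prop}

theorem ES2.force_of_bSim (hbs : BSim F bs) {A : Form} (hA : ES2 A) {V : F.W → ℕ → Prop} :
    ∀ {u u'}, bs u u' → force F V u A → force F V u' A := by
  induction hA with
  | box => exact fun h hu v hv => hu v ((hbs.1 _ _ h v).2 hv)
  | nbox => exact fun h hu hu' => hu fun v hv => hu' v ((hbs.1 _ _ h v).1 hv)
  | and _ _ ih₁ ih₂ => exact fun h hu => ⟨ih₁ h hu.1, ih₂ h hu.2⟩
  | or _ _ ih₁ ih₂ =>
    intro u u' h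
    simp only [force_or]
    exact Or.imp (ih₁ h) (ih₂ h)
  | nrhd _ ih =>
    intro u u' h hu hu'
    refine hu fun c huc hc => ?_
    obtain ⟨c', hcc', hbs_c, hincl⟩ := hbs.2 u u' c h huc
    obtain ⟨z, hz, hzB⟩ := hu' c' ((hbs.1 u u' h c').1 (F.S_dom _ _ _ hcc').2) (ih hbs_c hc)
    exact ⟨z, hincl z hz, hzB⟩

theorem valid_B_of_bSim (hbs : BSim F bs)
    (hsucc : ∀ x y : F.W, F.R x y → ∃ y', F.S x y y' ∧ bs y y' ∧
      ∀ d e, F.S x y' d → F.R d e → F.R y e)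
    {A B C : Form} (hA : ES2 A) :
    valid F ((A.rhd B).imp ((A.and C.box).rhd (B.and C.box))) := by
  intro V w hAB u hwu ⟨huA, huC⟩
  obtain ⟨u', hSuu', hbs_u, hback⟩ := hsucc w u hwu
  obtain ⟨v, hSu'v, hvB⟩ := hAB u' (F.S_dom _ _ _ hSuu').2 (hA.force_of_bSim hbs hbs_u huA)
  exact ⟨v, F.S_trans _ _ _ _ hSuu' hSu'v, hvB, fun e hve => huC e (hback v e hSu'v hve)⟩

end Simulation

section Bis

variable {F : VFrame}

lemma bis_refl (n : ℕ) (w : F.W) : bis F n w w := by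
  induction n generalizing w with
  | zero => exact fun _ => Iff.rfl
  | succ n ih => exact ⟨ih w, fun c hc => ⟨c, hc, ih c, fun _ hz => hz⟩⟩

lemma bis_antitone : Antitone (bis F) :=
  antitone_nat_of_succ_le fun _ _ _ h => h.1

lemma R_iff_of_bis {n : ℕ} {x x' : F.W} (h : bis F n x x') (y : F.W) : F.R x y ↔ F.R x' y :=
  bis_antitone n.zero_le x x' h y

lemma exists_bis_eq_bis_succ (F : VFrame) [Finite F.W] : ∃ N, bis F N = bis F (N + 1) := by
  obtain ⟨N, hN⟩ := WellFoundedLT.antitone_chain_condition (bis_antitone (F := F))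
  exact ⟨N, hN (N + 1) N.le_succ⟩

lemma bSim_bis_of_eq_succ {N : ℕ} (hN : bis F N = bis F (N + 1)) : BSim F (bis F N) := by
  refine ⟨fun x x' h => R_iff_of_bis h, fun x x' y h hxy => ?_⟩
  rw [hN] at h
  obtain ⟨y', hx'y', hyy', hincl⟩ := h.2 y hxy
  exact ⟨y', hincl y' (F.S_refl _ _ hx'y'), hyy', hincl⟩

end Bis

lemma exists_valuation_defining_sets (F : VFrame) [Finite F.W] :
    ∃ (V : F.W → ℕ → Prop) (atom : Set F.W → Form), ∀ S u, force F V u (atom S) ↔ u ∈ S := by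
  obtain ⟨e, he⟩ := exists_surjective_nat (Set F.W)
  refine ⟨fun w n => w ∈ e n, fun S => .var (Function.surjInv he S), fun S u => ?_⟩
  simp [force, Function.surjInv_eq he]

theorem exists_successor_of_forces_B {F : VFrame} {V : F.W → ℕ → Prop} {atom : Set F.W → Form}
    (hatom : ∀ S u, force F V u (atom S) ↔ u ∈ S) {A : Form} {P : F.W → Prop}
    (hA : ∀ u, force F V u A ↔ P u) {x y : F.W} (hy : P y) (hxy : F.R x y)
    (hB : ∀ B C : Form, force F V x ((A.rhd B).imp ((A.and C.box).rhd (B.and C.box)))) :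
    ∃ y', F.S x y y' ∧ P y' ∧ ∀ d e, F.S x y' d → F.R d e → F.R y e := by
  set good := {v | P v ∧ ∀ d e, F.S x v d → F.R d e → F.R y e}
  set bad := {d | ∃ e, F.R d e ∧ ¬ F.R y e}
  have hA_rhd : force F V x (A.rhd (atom (good ∪ bad))) := by
    intro u hxu huA
    by_cases hu : ∀ d e, F.S x u d → F.R d e → F.R y e
    · exact ⟨u, F.S_refl _ _ hxu, (hatom _ _).2 (Or.inl ⟨(hA u).1 huA, hu⟩)⟩
    · push Not at hu
      obtain ⟨d, e, hd, hde, hye⟩ := hu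
      exact ⟨d, hd, (hatom _ _).2 (Or.inr ⟨e, hde, hye⟩)⟩
  obtain ⟨y', hyy', hy'B, hy'C⟩ :=
    hB _ (atom {e | F.R y e}) hA_rhd y hxy ⟨(hA y).2 hy, fun e hye => (hatom _ _).2 hye⟩
  rcases (hatom _ _).1 hy'B with hgood | ⟨e, hy'e, hye⟩
  · exact ⟨y', hyy', hgood⟩
  · exact absurd ((hatom _ _).1 (hy'C e hy'e)) hye

section BisFormula

variable {F : VFrame} [Finite F.W] (atom : Set F.W → Form)

noncomputable def bisFormula : ℕ → F.W → Form
  | 0, w => (atom {v | F.R w v}).box.and (Form.conjOn {t | F.R w t} fun t => (atom {t}).dia)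
  | n + 1, w => (bisFormula n w).and (Form.conjOn {c | F.R w c} fun c =>
      ((bisFormula n c).rhd (atom {z | F.S w c z}).neg).neg)

lemma ES2_bisFormula (n : ℕ) (w : F.W) : ES2 (bisFormula atom n w) := by
  induction n generalizing w with
  | zero => exact .and .box (.conjOn fun _ => .nbox)
  | succ n ih => exact .and (ih w) (.conjOn fun c => .nrhd (ih c))

lemma force_bisFormula {atom : Set F.W → Form} {V : F.W → ℕ → Prop}
    (hatom : ∀ S u, force F V u (atom S) ↔ u ∈ S) (n : ℕ) (w u : F.W) :
    force F V u (bisFormula atom n w) ↔ bis F n w u := by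
  induction n generalizing w u with
  | zero => simp [bisFormula, force, hatom, bis, iff_def, forall_and, and_comm]
  | succ n ih => simp [bisFormula, force, hatom, ih, bis]

end BisFormula

/-- frame condition for Beklemishev's principle B via B-simulations. -/
theorem frame_condition_B (F : VFrame) [Finite F.W] :
    (∀ A B C : Form, ES2 A →
        valid F ((A.rhd B).imp ((A.and (Form.box C)).rhd (B.and (Form.box C)))))
      ↔
    (∃ bs : F.W → F.W → Prop, BSim F bs ∧
        ∀ x y : F.W, F.R x y → ∃ y', F.S x y y' ∧ bs y y' ∧
          ∀ d e, F.S x y' d → F.R d e → F.R y e) := by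
  refine ⟨fun hB => ?_, fun ⟨bs, hbs, hsucc⟩ A B C hA => valid_B_of_bSim hbs hsucc hA⟩
  obtain ⟨N, hN⟩ := exists_bis_eq_bis_succ F
  obtain ⟨V, atom, hatom⟩ := exists_valuation_defining_sets F
  refine ⟨bis F N, bSim_bis_of_eq_succ hN, fun x y hxy => ?_⟩
  exact exists_successor_of_forces_B hatom (force_bisFormula hatom N y) (bis_refl N y) hxy
    fun B C => hB _ B C (ES2_bisFormula atom N y) V x
end

section
/- The logic IL extended with Beklemishev's principle B derives the principle M₀: A▷B → (◇A ∧ □C ▷ B ∧ □C). -/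
/-- The Beklemishev axiom schema B. -/
def BAx : Form → Prop := fun X =>
  ∃ A B C : Form, ES2 A ∧
    X = (A.rhd B).imp ((A.and (Form.box C)).rhd (B.and (Form.box C)))

namespace ILExt

variable {Ax : Form → Prop}

theorem imp_trans {P Q R : Form} (hPQ : ILExt Ax (P.imp Q)) (hQR : ILExt Ax (Q.imp R)) :
    ILExt Ax (P.imp R) := by
  have syllogism : Taut ((P.imp Q).imp ((Q.imp R).imp (P.imp R))) := by
    rintro v ⟨-, -, hv_imp⟩
    simp only [hv_imp]
    cases v P <;> cases v Q <;> cases v R <;> rfl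
  exact mp (mp (taut syllogism) hPQ) hQR

theorem imp_of_and_imp {P Q R : Form} (h : ILExt Ax ((P.and Q).imp R)) (hP : ILExt Ax P) :
    ILExt Ax (Q.imp R) := by
  have curry : Taut (((P.and Q).imp R).imp (P.imp (Q.imp R))) := by
    rintro v ⟨-, hv_and, hv_imp⟩
    simp only [hv_imp, hv_and]
    cases v P <;> cases v Q <;> cases v R <;> rfl
  exact mp (mp (taut curry) h) hP

theorem rhd_imp_dia_rhd (A B : Form) : ILExt Ax ((A.rhd B).imp (A.dia.rhd B)) :=
  imp_of_and_imp J2 J5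

theorem beklemishev {A : Form} (hA : ES2 A) (B C : Form) :
    ILExt BAx ((A.rhd B).imp ((A.and C.box).rhd (B.and C.box))) :=
  ax ⟨A, B, C, hA, rfl⟩

end ILExt

theorem ES2.dia (A : Form) : ES2 A.dia := ES2.nbox

/-- ILB derives M₀. -/
theorem ILB_derives_M0 (A B C : Form) :
    ILExt BAx ((A.rhd B).imp
      (((A.dia).and (Form.box C)).rhd (B.and (Form.box C)))) :=
  (ILExt.rhd_imp_dia_rhd A B).imp_trans (ILExt.beklemishev (ES2.dia A) B C)
end
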